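/- With φ_k as in the determinantal construction (φ_k = (ρ/N)^{1/2} e^{i(kf(x₁) − M(x₁) + S)}), Σ_{k=0}^{N−1} Im(conj(φ_k) ∇φ_k) = ρ ∇S + ρ(((N−1)/2)(df/dx₁) − dM/dx₁) ê_x, where ê_x is the first standard basis vector. In particular, choosing ∇S = jᵖ/ρ and M = ((N−1)/2) f, the resulting determinant ψ_D has paramagnetic current jᵖ_{ψ_D} = jᵖ. -/

import Mathlib

/-!
Each orbital has the polar form `a e^{iθ}` with real amplitude `a = r/√N`, so
`Im(conj φ ∇φ) = a² ∇θ`: since `|e^{iθ}| = 1`, the derivative of the amplitude only contributes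
the real term `a ∇a`. The phase gradients `(k f' − M') ê_x + ∇S` are then summed over `k < N`
with `Σ k = N(N−1)/2`, and the choice `M' = ((N−1)/2) f'` cancels the `ê_x` term.
-/

open MeasureTheory

/-- Orbitals `φ_k = (ρ/N)^{1/2} e^{i(k f(x₁) − M(x₁) + S(x))}`, written with `r = ρ^{1/2}`. -/
noncomputable def orb (N : ℕ) (r : EuclideanSpace ℝ (Fin 3) → ℝ) (f M : ℝ → ℝ)
    (S : EuclideanSpace ℝ (Fin 3) → ℝ) (k : ℕ) (x : EuclideanSpace ℝ (Fin 3)) : ℂ :=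
  ((r x / Real.sqrt N : ℝ) : ℂ) *
    Complex.exp (Complex.I * (((k : ℝ) * f (x 0) - M (x 0) + S x : ℝ) : ℂ))

open Complex ComplexConjugate in
theorem im_conj_mul_fderiv_ofReal_mul_exp {E : Type*} [NormedAddCommGroup E] [NormedSpace ℝ E]
    {a θ : E → ℝ} {x : E} (ha : DifferentiableAt ℝ a x) (hθ : DifferentiableAt ℝ θ x) (v : E) :
    (conj ((a x : ℂ) * exp (I * θ x)) * fderiv ℝ (fun y => (a y : ℂ) * exp (I * θ y)) x v).im
      = a x ^ 2 * fderiv ℝ θ x v := by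
  have hφ : HasFDerivAt (fun y => (a y : ℂ) * exp (I * θ y)) _ x :=
    (ofRealCLM.hasFDerivAt.comp x ha.hasFDerivAt).mul
      ((ofRealCLM.hasFDerivAt.comp x hθ.hasFDerivAt).const_mul I).cexp
  have hunit : conj (exp (I * θ x)) * exp (I * θ x) = 1 := by
    rw [conj_mul', norm_exp_I_mul_ofReal, ofReal_one, one_pow]
  have key : conj ((a x : ℂ) * exp (I * θ x)) * fderiv ℝ (fun y => (a y : ℂ) * exp (I * θ y)) x v
      = (a x : ℂ) ^ 2 * I * (fderiv ℝ θ x v : ℂ) + (a x : ℂ) * (fderiv ℝ a x v : ℂ) := by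
    rw [hφ.fderiv]
    simp only [add_apply, smul_apply, ContinuousLinearMap.coe_comp, Function.comp_apply,
      ofRealCLM_apply, smul_eq_mul, map_mul, conj_ofReal]
    linear_combination ((a x : ℂ) ^ 2 * I * (fderiv ℝ θ x v : ℂ)
      + (a x : ℂ) * (fderiv ℝ a x v : ℂ)) * hunit
  rw [key]
  simp [pow_two]

theorem hasFDerivAt_orb_phase {S : EuclideanSpace ℝ (Fin 3) → ℝ} {f f' M M' : ℝ → ℝ} (k : ℕ)
    {x : EuclideanSpace ℝ (Fin 3)} (hS : DifferentiableAt ℝ S x)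
    (hf : HasDerivAt f (f' (x 0)) (x 0)) (hM : HasDerivAt M (M' (x 0)) (x 0)) :
    HasFDerivAt (fun y : EuclideanSpace ℝ (Fin 3) => (k : ℝ) * f (y 0) - M (y 0) + S y)
      (((k : ℝ) * f' (x 0) - M' (x 0)) • EuclideanSpace.proj 0 + fderiv ℝ S x) x := by
  have hx₀ : HasFDerivAt (fun y : EuclideanSpace ℝ (Fin 3) => y 0)
      (EuclideanSpace.proj (𝕜 := ℝ) 0) x :=
    (EuclideanSpace.proj (𝕜 := ℝ) (ι := Fin 3) 0).hasFDerivAt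
  refine ((((hf.comp_hasFDerivAt x hx₀).const_mul (k : ℝ)).sub
    (hM.comp_hasFDerivAt x hx₀)).add hS.hasFDerivAt).congr_fderiv ?_
  ext v
  simp
  ring

theorem im_conj_orb_mul_fderiv_orb (N : ℕ) {r S : EuclideanSpace ℝ (Fin 3) → ℝ}
    {f f' M M' : ℝ → ℝ} (k : ℕ) {x : EuclideanSpace ℝ (Fin 3)} (hr : DifferentiableAt ℝ r x)
    (hS : DifferentiableAt ℝ S x)
    (hf : HasDerivAt f (f' (x 0)) (x 0)) (hM : HasDerivAt M (M' (x 0)) (x 0))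
    (v : EuclideanSpace ℝ (Fin 3)) :
    ((starRingEnd ℂ) (orb N r f M S k x) * fderiv ℝ (orb N r f M S k) x v).im
      = r x ^ 2 / N * (((k : ℝ) * f' (x 0) - M' (x 0)) * v 0 + fderiv ℝ S x v) := by
  have hθ := hasFDerivAt_orb_phase k hS hf hM
  refine (im_conj_mul_fderiv_ofReal_mul_exp (a := fun y => r y / √N) (by fun_prop)
    hθ.differentiableAt v).trans ?_
  simp only [hθ.fderiv, div_pow, Real.sq_sqrt N.cast_nonneg]
  simp

theorem sum_range_natCast_mul_add (N : ℕ) (a b : ℝ) :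
    ∑ k ∈ Finset.range N, ((k : ℝ) * a + b) = N * (((N : ℝ) - 1) / 2 * a + b) := by
  induction N with
  | zero => simp
  | succ n ih => rw [Finset.sum_range_succ, ih]; push_cast; ring

theorem sum_im_conj_orb_mul_fderiv_orb {N : ℕ} (hN : N ≠ 0) {r S : EuclideanSpace ℝ (Fin 3) → ℝ}
    {f f' M M' : ℝ → ℝ} {x : EuclideanSpace ℝ (Fin 3)} (hr : DifferentiableAt ℝ r x)
    (hS : DifferentiableAt ℝ S x)
    (hf : HasDerivAt f (f' (x 0)) (x 0)) (hM : HasDerivAt M (M' (x 0)) (x 0))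
    (v : EuclideanSpace ℝ (Fin 3)) :
    ∑ k ∈ Finset.range N,
        ((starRingEnd ℂ) (orb N r f M S k x) * fderiv ℝ (orb N r f M S k) x v).im
      = r x ^ 2 * fderiv ℝ S x v
        + r x ^ 2 * (((N : ℝ) - 1) / 2 * f' (x 0) - M' (x 0)) * v 0 := by
  calc _ = ∑ k ∈ Finset.range N,
        r x ^ 2 / N * ((k : ℝ) * (f' (x 0) * v 0) + (fderiv ℝ S x v - M' (x 0) * v 0)) := by
        refine Finset.sum_congr rfl fun k _ => ?_
        rw [im_conj_orb_mul_fderiv_orb N k hr hS hf hM]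
        ring
    _ = _ := by
        rw [← Finset.mul_sum, sum_range_natCast_mul_add]
        field_simp
        ring

/-- `Σ_{k<N} Im(conj(φ_k) ∇φ_k) = ρ ∇S + ρ(((N−1)/2) f' − M') ê₁` (evaluated in an arbitrary
direction `v`, the `ê₁` term contributing `v 0`); in particular with `M' = ((N−1)/2) f'`
the sum equals `ρ ∇S`, i.e. the paramagnetic current of the determinant is `ρ ∇S = jᵖ`. -/
theorem stmt14 (N : ℕ) (hN : 1 ≤ N)
    (r S : EuclideanSpace ℝ (Fin 3) → ℝ) (f f' M M' : ℝ → ℝ)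
    (hr : Differentiable ℝ r) (hS : Differentiable ℝ S)
    (hf : ∀ t, HasDerivAt f (f' t) t) (hM : ∀ t, HasDerivAt M (M' t) t) :
    (∀ (x v : EuclideanSpace ℝ (Fin 3)),
        ∑ k ∈ Finset.range N,
            ((starRingEnd ℂ) (orb N r f M S k x) * fderiv ℝ (orb N r f M S k) x v).im
          = r x ^ 2 * fderiv ℝ S x v
            + r x ^ 2 * (((N : ℝ) - 1) / 2 * f' (x 0) - M' (x 0)) * v 0) ∧
      ((∀ t, M' t = ((N : ℝ) - 1) / 2 * f' t) →
        ∀ (x v : EuclideanSpace ℝ (Fin 3)),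
          ∑ k ∈ Finset.range N,
              ((starRingEnd ℂ) (orb N r f M S k x) * fderiv ℝ (orb N r f M S k) x v).im
            = r x ^ 2 * fderiv ℝ S x v) := by
  have current (x v : EuclideanSpace ℝ (Fin 3)) :=
    sum_im_conj_orb_mul_fderiv_orb (Nat.one_le_iff_ne_zero.mp hN) (hr x) (hS x) (hf _) (hM _) v
  refine ⟨current, fun hM' x v => ?_⟩
  rw [current, hM']
  ring
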